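/- arXiv:2212.11472 — 2 statements merged into one kernel-verified Lean document; each statement's English description precedes it below -/
import Mathlib

section
/- Let g ≥ 1, n ≥ 2 be integers and ℓ ≥ 5 a prime. Let G be a closed subgroup of Δ_{2g,n}(Z_ℓ). Then G = Δ_{2g,n}(Z_ℓ) if and only if mult(G) = Z_ℓ^× and pr_{i,j}(G) = Δ_{2g}(Z_ℓ) for all 1 ≤ i ≠ j ≤ n, where pr_{i,j} is the projection onto the pair of the i-th and j-th coordinates. -/
/-!
Over a local ring in which `2` and `3` are units, `Sp_{2g}` is perfect. Symplectic row
reduction shows that it is generated by the transvections `x ↦ x + c ω(x, v) v` with unimodular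
`v`; each of them is conjugate in `Sp_{2g}` to one along `e₁`, and
`T_{e₁}(c) = [diag(2, 1/2), T_{e₁}(c/3)]`.

Now let `G ≤ Δ_{2g,n}` have full pairwise projections and fix a coordinate `i`. For a set `T` of
other coordinates, the `i`-th coordinates of the elements of `G` that are trivial on `T` form a
group `C_T`; it contains `Sp_{2g}` when `|T| = 1`, and `[C_T, C_{T'}] ≤ C_{T ∪ T'}`. Perfectness
therefore gives `Sp_{2g} ≤ C_T` for `T` the set of all other coordinates, i.e. `Sp_{2g}^n ≤ G`, and
the surjectivity of the multiplier on `G` upgrades this to `G = Δ_{2g,n}(ℤ_ℓ)`.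
-/

open Matrix Polynomial

namespace Paper

variable (g : ℕ) (R : Type*) [CommRing R]

/-- The standard symplectic form matrix `J = [[0, I], [-I, 0]]`. -/
def sJ : Matrix (Fin g ⊕ Fin g) (Fin g ⊕ Fin g) R := Matrix.fromBlocks 0 1 (-1) 0

variable {g R}

lemma symp_one :
    ((1 : GL (Fin g ⊕ Fin g) R) : Matrix (Fin g ⊕ Fin g) (Fin g ⊕ Fin g) R)ᵀ * sJ g R *
      ((1 : GL (Fin g ⊕ Fin g) R) : Matrix (Fin g ⊕ Fin g) (Fin g ⊕ Fin g) R)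
      = ((1 : Rˣ) : R) • sJ g R := by
  simp

lemma symp_mul {a b : GL (Fin g ⊕ Fin g) R} {u v : Rˣ}
    (ha : (a : Matrix (Fin g ⊕ Fin g) (Fin g ⊕ Fin g) R)ᵀ * sJ g R * a = (u : R) • sJ g R)
    (hb : (b : Matrix (Fin g ⊕ Fin g) (Fin g ⊕ Fin g) R)ᵀ * sJ g R * b = (v : R) • sJ g R) :
    ((a * b : GL (Fin g ⊕ Fin g) R) : Matrix (Fin g ⊕ Fin g) (Fin g ⊕ Fin g) R)ᵀ * sJ g R *
      ((a * b : GL (Fin g ⊕ Fin g) R) : Matrix (Fin g ⊕ Fin g) (Fin g ⊕ Fin g) R)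
      = ((u * v : Rˣ) : R) • sJ g R := by
  have hab : ((a * b : GL (Fin g ⊕ Fin g) R) : Matrix (Fin g ⊕ Fin g) (Fin g ⊕ Fin g) R)
      = (a : Matrix (Fin g ⊕ Fin g) (Fin g ⊕ Fin g) R) * b := rfl
  calc ((a * b : GL (Fin g ⊕ Fin g) R) : Matrix (Fin g ⊕ Fin g) (Fin g ⊕ Fin g) R)ᵀ * sJ g R *
        ((a * b : GL (Fin g ⊕ Fin g) R) : Matrix (Fin g ⊕ Fin g) (Fin g ⊕ Fin g) R)
      = (b : Matrix (Fin g ⊕ Fin g) (Fin g ⊕ Fin g) R)ᵀ *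
          ((a : Matrix (Fin g ⊕ Fin g) (Fin g ⊕ Fin g) R)ᵀ * sJ g R * a) * b := by
        rw [hab, transpose_mul]; noncomm_ring
    _ = (b : Matrix (Fin g ⊕ Fin g) (Fin g ⊕ Fin g) R)ᵀ * ((u : R) • sJ g R) * b := by rw [ha]
    _ = (u : R) • ((b : Matrix (Fin g ⊕ Fin g) (Fin g ⊕ Fin g) R)ᵀ * sJ g R * b) := by
        rw [Matrix.mul_smul, Matrix.smul_mul]
    _ = (u : R) • ((v : R) • sJ g R) := by rw [hb]
    _ = ((u * v : Rˣ) : R) • sJ g R := by rw [smul_smul, Units.val_mul]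

lemma symp_inv {a : GL (Fin g ⊕ Fin g) R} {u : Rˣ}
    (ha : (a : Matrix (Fin g ⊕ Fin g) (Fin g ⊕ Fin g) R)ᵀ * sJ g R * a = (u : R) • sJ g R) :
    ((a⁻¹ : GL (Fin g ⊕ Fin g) R) : Matrix (Fin g ⊕ Fin g) (Fin g ⊕ Fin g) R)ᵀ * sJ g R *
      ((a⁻¹ : GL (Fin g ⊕ Fin g) R) : Matrix (Fin g ⊕ Fin g) (Fin g ⊕ Fin g) R)
      = ((u⁻¹ : Rˣ) : R) • sJ g R := by
  have key : (u : R) • (((a⁻¹ : GL (Fin g ⊕ Fin g) R) : Matrix (Fin g ⊕ Fin g) (Fin g ⊕ Fin g) R)ᵀ *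
      sJ g R * ((a⁻¹ : GL (Fin g ⊕ Fin g) R) : Matrix (Fin g ⊕ Fin g) (Fin g ⊕ Fin g) R)) = sJ g R := by
    calc (u : R) • (((a⁻¹ : GL (Fin g ⊕ Fin g) R) : Matrix (Fin g ⊕ Fin g) (Fin g ⊕ Fin g) R)ᵀ *
          sJ g R * ((a⁻¹ : GL (Fin g ⊕ Fin g) R) : Matrix (Fin g ⊕ Fin g) (Fin g ⊕ Fin g) R))
        = ((a⁻¹ : GL (Fin g ⊕ Fin g) R) : Matrix (Fin g ⊕ Fin g) (Fin g ⊕ Fin g) R)ᵀ *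
            ((u : R) • sJ g R) * ((a⁻¹ : GL (Fin g ⊕ Fin g) R) : Matrix (Fin g ⊕ Fin g) (Fin g ⊕ Fin g) R) := by
          rw [Matrix.mul_smul, Matrix.smul_mul]
      _ = ((a⁻¹ : GL (Fin g ⊕ Fin g) R) : Matrix (Fin g ⊕ Fin g) (Fin g ⊕ Fin g) R)ᵀ *
            ((a : Matrix (Fin g ⊕ Fin g) (Fin g ⊕ Fin g) R)ᵀ * sJ g R * a) *
            ((a⁻¹ : GL (Fin g ⊕ Fin g) R) : Matrix (Fin g ⊕ Fin g) (Fin g ⊕ Fin g) R) := by rw [ha]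
      _ = ((a : Matrix (Fin g ⊕ Fin g) (Fin g ⊕ Fin g) R) *
            ((a⁻¹ : GL (Fin g ⊕ Fin g) R) : Matrix (Fin g ⊕ Fin g) (Fin g ⊕ Fin g) R))ᵀ * sJ g R *
            ((a : Matrix (Fin g ⊕ Fin g) (Fin g ⊕ Fin g) R) *
            ((a⁻¹ : GL (Fin g ⊕ Fin g) R) : Matrix (Fin g ⊕ Fin g) (Fin g ⊕ Fin g) R)) := by
          rw [transpose_mul]; noncomm_ring
      _ = sJ g R := by
          rw [← Units.val_mul, mul_inv_cancel]; simp
  calc ((a⁻¹ : GL (Fin g ⊕ Fin g) R) : Matrix (Fin g ⊕ Fin g) (Fin g ⊕ Fin g) R)ᵀ * sJ g R *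
        ((a⁻¹ : GL (Fin g ⊕ Fin g) R) : Matrix (Fin g ⊕ Fin g) (Fin g ⊕ Fin g) R)
      = ((u⁻¹ : Rˣ) : R) • ((u : R) •
          (((a⁻¹ : GL (Fin g ⊕ Fin g) R) : Matrix (Fin g ⊕ Fin g) (Fin g ⊕ Fin g) R)ᵀ * sJ g R *
          ((a⁻¹ : GL (Fin g ⊕ Fin g) R) : Matrix (Fin g ⊕ Fin g) (Fin g ⊕ Fin g) R))) := by
        rw [smul_smul, Units.inv_mul, one_smul]
    _ = ((u⁻¹ : Rˣ) : R) • sJ g R := by rw [key]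

variable (g R)

/-- The general symplectic group `GSp_{2g}(R)` as a subgroup of `GL_{2g}(R)`. -/
def GSp : Subgroup (GL (Fin g ⊕ Fin g) R) where
  carrier := {a | ∃ u : Rˣ,
    (a : Matrix (Fin g ⊕ Fin g) (Fin g ⊕ Fin g) R)ᵀ * sJ g R * a = (u : R) • sJ g R}
  one_mem' := ⟨1, symp_one⟩
  mul_mem' := fun ⟨u, hu⟩ ⟨v, hv⟩ => ⟨u * v, symp_mul hu hv⟩
  inv_mem' := fun ⟨u, hu⟩ => ⟨u⁻¹, symp_inv hu⟩

/-- The symplectic group `Sp_{2g}(R)`, the kernel of the multiplier. -/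
def Sp : Subgroup (GL (Fin g ⊕ Fin g) R) where
  carrier := {a | (a : Matrix (Fin g ⊕ Fin g) (Fin g ⊕ Fin g) R)ᵀ * sJ g R * a = sJ g R}
  one_mem' := by simpa using (symp_one (g := g) (R := R))
  mul_mem' := by
    intro a b ha hb
    have ha' : (a : Matrix (Fin g ⊕ Fin g) (Fin g ⊕ Fin g) R)ᵀ * sJ g R * a
        = ((1 : Rˣ) : R) • sJ g R := by simpa using ha
    have hb' : (b : Matrix (Fin g ⊕ Fin g) (Fin g ⊕ Fin g) R)ᵀ * sJ g R * b
        = ((1 : Rˣ) : R) • sJ g R := by simpa using hb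
    simpa using symp_mul ha' hb'
  inv_mem' := by
    intro a ha
    have ha' : (a : Matrix (Fin g ⊕ Fin g) (Fin g ⊕ Fin g) R)ᵀ * sJ g R * a
        = ((1 : Rˣ) : R) • sJ g R := by simpa using ha
    simpa using symp_inv ha'

/-- The fiber product `Δ_{2g}(R) = GSp ×_mult GSp`. -/
def Delta : Subgroup (GL (Fin g ⊕ Fin g) R × GL (Fin g ⊕ Fin g) R) where
  carrier := {p | ∃ u : Rˣ,
    (p.1 : Matrix (Fin g ⊕ Fin g) (Fin g ⊕ Fin g) R)ᵀ * sJ g R * p.1 = (u : R) • sJ g R ∧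
    (p.2 : Matrix (Fin g ⊕ Fin g) (Fin g ⊕ Fin g) R)ᵀ * sJ g R * p.2 = (u : R) • sJ g R}
  one_mem' := ⟨1, symp_one, symp_one⟩
  mul_mem' := fun ⟨u, hu1, hu2⟩ ⟨v, hv1, hv2⟩ => ⟨u * v, symp_mul hu1 hv1, symp_mul hu2 hv2⟩
  inv_mem' := fun ⟨u, hu1, hu2⟩ => ⟨u⁻¹, symp_inv hu1, symp_inv hu2⟩

/-- The `n`-fold fiber product `Δ_{2g,n}(R)`. -/
def DeltaN (n : ℕ) : Subgroup ((_ : Fin n) → GL (Fin g ⊕ Fin g) R) where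
  carrier := {p | ∃ u : Rˣ, ∀ i,
    (p i : Matrix (Fin g ⊕ Fin g) (Fin g ⊕ Fin g) R)ᵀ * sJ g R * p i = (u : R) • sJ g R}
  one_mem' := ⟨1, fun _ => symp_one⟩
  mul_mem' := fun ⟨u, hu⟩ ⟨v, hv⟩ => ⟨u * v, fun i => symp_mul (hu i) (hv i)⟩
  inv_mem' := fun ⟨u, hu⟩ => ⟨u⁻¹, fun i => symp_inv (hu i)⟩

variable {g R} in
/-- The multiplier of a symplectic similitude (defined to be `1` off `GSp`). -/
noncomputable def multiplier (a : GL (Fin g ⊕ Fin g) R) : Rˣ :=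
  letI := Classical.propDecidable
  if h : ∃ u : Rˣ,
      (a : Matrix (Fin g ⊕ Fin g) (Fin g ⊕ Fin g) R)ᵀ * sJ g R * a = (u : R) • sJ g R then
    h.choose
  else 1



lemma normal_comap_of_le_center {G : Type*} [Group G] (H K : Subgroup G)
    (hK : K ≤ Subgroup.center G) : (K.comap H.subtype).Normal := by
  constructor
  intro x hx y
  rw [Subgroup.mem_comap] at hx ⊢
  have hc : ∀ z : G, z * H.subtype x = H.subtype x * z :=
    fun z => Subgroup.mem_center_iff.mp (hK hx) z
  have hkey : H.subtype (y * x * y⁻¹) = H.subtype x := by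
    simp only [_root_.map_mul, _root_.map_inv]
    rw [hc (H.subtype y), mul_assoc, mul_inv_cancel, mul_one]
  rw [hkey]
  exact hx

lemma neg_one_mem_center :
    (-1 : GL (Fin g ⊕ Fin g) R) ∈ Subgroup.center (GL (Fin g ⊕ Fin g) R) := by
  rw [Subgroup.mem_center_iff]
  intro y
  simp

/-- The subgroup `{±I}` of `GSp_{2g}(R)`. -/
def pmI : Subgroup ↥(GSp g R) :=
  (Subgroup.zpowers (-1 : GL (Fin g ⊕ Fin g) R)).comap (GSp g R).subtype

instance pmI_normal : (pmI g R).Normal :=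
  normal_comap_of_le_center _ _ (Subgroup.zpowers_le.mpr (neg_one_mem_center g R))

/-- The subgroup `{±I}` of `Sp_{2g}(R)`. -/
def pmISp : Subgroup ↥(Sp g R) :=
  (Subgroup.zpowers (-1 : GL (Fin g ⊕ Fin g) R)).comap (Sp g R).subtype

instance pmISp_normal : (pmISp g R).Normal :=
  normal_comap_of_le_center _ _ (Subgroup.zpowers_le.mpr (neg_one_mem_center g R))

/-- `GSp_{2g}(R)/{±I}`. -/
abbrev GSpBar := ↥(GSp g R) ⧸ pmI g R

variable {g R}

/-- A multiplier-preserving automorphism of `GSp_{2g}(R)`. -/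
def IsMultAut (σ : MulAut ↥(GSp g R)) : Prop :=
  ∀ γ : ↥(GSp g R), multiplier ((σ γ : GL (Fin g ⊕ Fin g) R)) = multiplier (γ : GL (Fin g ⊕ Fin g) R)

/-- A multiplier-preserving automorphism of `GSp_{2g}(R)/{±I}`: expressed via representatives,
`mult ∘ σ = mult` where `mult` is the descended multiplier. -/
def IsMultAutBar (σ : MulAut (GSpBar g R)) : Prop :=
  ∀ γ δ : ↥(GSp g R), σ (QuotientGroup.mk γ) = QuotientGroup.mk δ →
    multiplier (δ : GL (Fin g ⊕ Fin g) R) = multiplier (γ : GL (Fin g ⊕ Fin g) R)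

/-- An inner automorphism. -/
def IsInner {G : Type*} [Group G] (σ : MulAut G) : Prop :=
  ∃ x : G, MulAut.conj x = σ

/-- `σ` is the radial map `γ ↦ mult(γ)^k • γ`. -/
def IsRadialWith (k : ℕ) (σ : MulAut ↥(GSp g R)) : Prop :=
  ∀ γ : ↥(GSp g R),
    ((σ γ : GL (Fin g ⊕ Fin g) R) : Matrix (Fin g ⊕ Fin g) (Fin g ⊕ Fin g) R)
      = ((multiplier (γ : GL (Fin g ⊕ Fin g) R) : Rˣ) : R) ^ k •
        ((γ : GL (Fin g ⊕ Fin g) R) : Matrix (Fin g ⊕ Fin g) (Fin g ⊕ Fin g) R)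

/-- A radial automorphism `χ_k` of `GSp_{2g}(F_ℓ)`. -/
def IsRadial (ℓ : ℕ) (σ : MulAut ↥(GSp g R)) : Prop :=
  ∃ k : ℕ, k < ℓ - 1 ∧ Nat.gcd (2 * k + 1) (ℓ - 1) = 1 ∧ IsRadialWith k σ



variable (g R)

/-- The subgroup of invertible scalar matrices `R_{2g}(R)` inside `GL_{2g}(R)`. -/
def ScalarGL : Subgroup (GL (Fin g ⊕ Fin g) R) where
  carrier := {a | ∃ lam : Rˣ,
    (a : Matrix (Fin g ⊕ Fin g) (Fin g ⊕ Fin g) R) = (lam : R) • 1}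
  one_mem' := ⟨1, by simp⟩
  mul_mem' := by
    rintro a b ⟨s, hs⟩ ⟨t, ht⟩
    refine ⟨s * t, ?_⟩
    have hab : ((a * b : GL (Fin g ⊕ Fin g) R) : Matrix (Fin g ⊕ Fin g) (Fin g ⊕ Fin g) R)
        = (a : Matrix (Fin g ⊕ Fin g) (Fin g ⊕ Fin g) R) * b := rfl
    rw [hab, hs, ht, Matrix.smul_mul, Matrix.mul_smul, smul_smul, one_mul, Units.val_mul]
  inv_mem' := by
    rintro a ⟨s, hs⟩
    refine ⟨s⁻¹, ?_⟩
    have h1 : ((s⁻¹ : Rˣ) : R) • (1 : Matrix (Fin g ⊕ Fin g) (Fin g ⊕ Fin g) R) *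
        (a : Matrix (Fin g ⊕ Fin g) (Fin g ⊕ Fin g) R) = 1 := by
      rw [hs, Matrix.smul_mul, Matrix.mul_smul, smul_smul, one_mul, Units.inv_mul, one_smul]
    exact Units.inv_eq_of_mul_eq_one_left h1

lemma scalar_le_center : ScalarGL g R ≤ Subgroup.center (GL (Fin g ⊕ Fin g) R) := by
  rintro a ⟨s, hs⟩
  rw [Subgroup.mem_center_iff]
  intro y
  refine Units.ext ?_
  show (y : Matrix (Fin g ⊕ Fin g) (Fin g ⊕ Fin g) R) * a
      = (a : Matrix (Fin g ⊕ Fin g) (Fin g ⊕ Fin g) R) * y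
  rw [hs, Matrix.mul_smul, Matrix.smul_mul, mul_one, one_mul]

/-- The subgroup of scalars inside `GSp_{2g}(R)`. -/
def Rsub : Subgroup ↥(GSp g R) := (ScalarGL g R).comap (GSp g R).subtype

instance Rsub_normal : (Rsub g R).Normal :=
  normal_comap_of_le_center _ _ (scalar_le_center g R)

/-- The block diagonal matrix `diag(a·I_g, I_g)`. -/
def iotaM (a : R) : Matrix (Fin g ⊕ Fin g) (Fin g ⊕ Fin g) R :=
  Matrix.fromBlocks (a • 1) 0 0 1

/-- `ι : R^× → GL_{2g}(R)`, `a ↦ diag(a·I_g, I_g)`. -/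
def iota (a : Rˣ) : GL (Fin g ⊕ Fin g) R where
  val := iotaM g R (a : R)
  inv := iotaM g R ((a⁻¹ : Rˣ) : R)
  val_inv := by
    simp [iotaM, Matrix.fromBlocks_multiply, Matrix.smul_mul, Matrix.mul_smul, smul_smul,
      ← Units.val_mul]
  inv_val := by
    simp [iotaM, Matrix.fromBlocks_multiply, Matrix.smul_mul, Matrix.mul_smul, smul_smul,
      ← Units.val_mul]



lemma iota_mem (a : Rˣ) : iota g R a ∈ GSp g R := by
  refine ⟨a, ?_⟩
  show (iotaM g R (a : R))ᵀ * sJ g R * iotaM g R (a : R) = (a : R) • sJ g R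
  simp [iotaM, sJ, Matrix.fromBlocks_transpose, Matrix.fromBlocks_multiply,
    Matrix.fromBlocks_smul, Matrix.smul_mul, Matrix.mul_smul]

lemma iota_mul (a b : Rˣ) : iota g R (a * b) = iota g R a * iota g R b := by
  refine Units.ext ?_
  show iotaM g R ((a * b : Rˣ) : R) = iotaM g R (a : R) * iotaM g R (b : R)
  simp [iotaM, Matrix.fromBlocks_multiply, Matrix.smul_mul, Matrix.mul_smul, smul_smul,
    mul_comm]

/-- `ι` as a group homomorphism `R^× → GSp_{2g}(R)`. -/
def iotaHom : Rˣ →* ↥(GSp g R) where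
  toFun a := ⟨iota g R a, iota_mem g R a⟩
  map_one' := by
    refine Subtype.ext (Units.ext ?_)
    show iotaM g R ((1 : Rˣ) : R) = (1 : Matrix (Fin g ⊕ Fin g) (Fin g ⊕ Fin g) R)
    simp [iotaM, Matrix.fromBlocks_one]
  map_mul' a b := Subtype.ext (iota_mul g R a b)

variable {g R}

section SymplecticForm

def sympForm (x y : Fin g ⊕ Fin g → R) : R := x ⬝ᵥ (sJ g R *ᵥ y)

def eVec (i : Fin g) : Fin g ⊕ Fin g → R := Pi.single (Sum.inl i) 1

def fVec (i : Fin g) : Fin g ⊕ Fin g → R := Pi.single (Sum.inr i) 1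

lemma sympForm_eq_sum (x y : Fin g ⊕ Fin g → R) :
    sympForm x y = ∑ i, x (Sum.inl i) * y (Sum.inr i) - ∑ i, x (Sum.inr i) * y (Sum.inl i) := by
  simp [sympForm, sJ, dotProduct, mulVec, fromBlocks, Fintype.sum_sum_type, one_apply,
    sub_eq_add_neg]

lemma sympForm_swap (x y : Fin g ⊕ Fin g → R) : sympForm y x = -sympForm x y := by
  simp only [sympForm_eq_sum, neg_sub, mul_comm]

@[simp] lemma sympForm_self (x : Fin g ⊕ Fin g → R) : sympForm x x = 0 := by
  rw [sympForm_eq_sum, sub_eq_zero]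
  exact Finset.sum_congr rfl fun i _ => mul_comm _ _

lemma sympForm_add_left (x x' y : Fin g ⊕ Fin g → R) :
    sympForm (x + x') y = sympForm x y + sympForm x' y := add_dotProduct x x' _

lemma sympForm_add_right (x y y' : Fin g ⊕ Fin g → R) :
    sympForm x (y + y') = sympForm x y + sympForm x y' := by
  simp [sympForm, mulVec_add]

lemma sympForm_sub_right (x y y' : Fin g ⊕ Fin g → R) :
    sympForm x (y - y') = sympForm x y - sympForm x y' := by
  simp [sympForm, mulVec_sub]

lemma sympForm_smul_left (c : R) (x y : Fin g ⊕ Fin g → R) :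
    sympForm (c • x) y = c * sympForm x y := smul_dotProduct c x _

lemma sympForm_smul_right (c : R) (x y : Fin g ⊕ Fin g → R) :
    sympForm x (c • y) = c * sympForm x y := by
  simp [sympForm, mulVec_smul]

@[simp] lemma sympForm_eVec (x : Fin g ⊕ Fin g → R) (j : Fin g) :
    sympForm x (eVec j) = -x (Sum.inr j) := by
  simp [sympForm_eq_sum, eVec, Pi.single_apply]

@[simp] lemma sympForm_fVec (x : Fin g ⊕ Fin g → R) (j : Fin g) :
    sympForm x (fVec j) = x (Sum.inl j) := by
  simp [sympForm_eq_sum, fVec, Pi.single_apply]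

@[simp] lemma eVec_sympForm (y : Fin g ⊕ Fin g → R) (j : Fin g) :
    sympForm (eVec j) y = y (Sum.inr j) := by
  simp [sympForm_eq_sum, eVec, Pi.single_apply]

@[simp] lemma fVec_sympForm (y : Fin g ⊕ Fin g → R) (j : Fin g) :
    sympForm (fVec j) y = -y (Sum.inl j) := by
  simp [sympForm_eq_sum, fVec, Pi.single_apply]

@[simp] lemma eVec_inl (i j : Fin g) :
    (eVec j : Fin g ⊕ Fin g → R) (Sum.inl i) = if i = j then 1 else 0 := by
  simp [eVec, Pi.single_apply]

@[simp] lemma eVec_inr (i j : Fin g) : (eVec j : Fin g ⊕ Fin g → R) (Sum.inr i) = 0 := by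
  simp [eVec]

@[simp] lemma fVec_inl (i j : Fin g) : (fVec j : Fin g ⊕ Fin g → R) (Sum.inl i) = 0 := by
  simp [fVec]

@[simp] lemma fVec_inr (i j : Fin g) :
    (fVec j : Fin g ⊕ Fin g → R) (Sum.inr i) = if i = j then 1 else 0 := by
  simp [fVec, Pi.single_apply]

lemma units_smul_eq_mulVec (a : GL (Fin g ⊕ Fin g) R) (x : Fin g ⊕ Fin g → R) :
    a • x = (a : Matrix (Fin g ⊕ Fin g) (Fin g ⊕ Fin g) R) *ᵥ x := rfl

lemma ext_of_smul {a b : GL (Fin g ⊕ Fin g) R} (h : ∀ x : Fin g ⊕ Fin g → R, a • x = b • x) :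
    a = b :=
  Units.ext (ext_iff_mulVec.mpr h)

lemma sympForm_smul_smul (a : GL (Fin g ⊕ Fin g) R) (x y : Fin g ⊕ Fin g → R) :
    sympForm (a • x) (a • y) =
      x ⬝ᵥ ((a : Matrix (Fin g ⊕ Fin g) (Fin g ⊕ Fin g) R)ᵀ * sJ g R *
        (a : Matrix (Fin g ⊕ Fin g) (Fin g ⊕ Fin g) R)) *ᵥ y := by
  rw [sympForm, units_smul_eq_mulVec, units_smul_eq_mulVec, ← mulVec_mulVec, ← mulVec_mulVec,
    dotProduct_mulVec x, vecMul_transpose, mulVec_mulVec]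

lemma mem_Sp_iff_sympForm {a : GL (Fin g ⊕ Fin g) R} :
    a ∈ Sp g R ↔ ∀ x y : Fin g ⊕ Fin g → R, sympForm (a • x) (a • y) = sympForm x y := by
  refine ⟨fun ha x y => by rw [sympForm_smul_smul, show _ = sJ g R from ha, sympForm],
    fun h => ?_⟩
  show _ = _
  ext p q
  have hpq := h (Pi.single p 1) (Pi.single q 1)
  rw [sympForm_smul_smul, sympForm] at hpq
  simpa [single_dotProduct, mulVec_single_one] using hpq

end SymplecticForm

section Transvection

def sympTransvectionMat (v : Fin g ⊕ Fin g → R) (c : R) :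
    Matrix (Fin g ⊕ Fin g) (Fin g ⊕ Fin g) R :=
  1 + c • vecMulVec v (sJ g R *ᵥ v)

lemma sympTransvectionMat_mulVec (v x : Fin g ⊕ Fin g → R) (c : R) :
    sympTransvectionMat v c *ᵥ x = x + (c * sympForm x v) • v := by
  rw [sympTransvectionMat, add_mulVec, one_mulVec, smul_mulVec, vecMulVec_mulVec, op_smul_eq_smul,
    smul_smul, sympForm, dotProduct_comm]

lemma sympTransvectionMat_mul (v : Fin g ⊕ Fin g → R) (c d : R) :
    sympTransvectionMat v c * sympTransvectionMat v d = sympTransvectionMat v (c + d) := by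
  refine ext_iff_mulVec.mpr fun x => ?_
  simp only [← mulVec_mulVec, sympTransvectionMat_mulVec, sympForm_add_left,
    sympForm_smul_left, sympForm_self]
  module

def sympTransvection (v : Fin g ⊕ Fin g → R) (c : R) : GL (Fin g ⊕ Fin g) R where
  val := sympTransvectionMat v c
  inv := sympTransvectionMat v (-c)
  val_inv := by
    rw [sympTransvectionMat_mul, add_neg_cancel, sympTransvectionMat, zero_smul, add_zero]
  inv_val := by
    rw [sympTransvectionMat_mul, neg_add_cancel, sympTransvectionMat, zero_smul, add_zero]

lemma sympTransvection_smul (v x : Fin g ⊕ Fin g → R) (c : R) :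
    sympTransvection v c • x = x + (c * sympForm x v) • v :=
  sympTransvectionMat_mulVec v x c

lemma sympTransvection_mem_Sp (v : Fin g ⊕ Fin g → R) (c : R) : sympTransvection v c ∈ Sp g R := by
  refine mem_Sp_iff_sympForm.mpr fun x y => ?_
  simp only [sympTransvection_smul, sympForm_add_left, sympForm_add_right, sympForm_smul_left,
    sympForm_smul_right, sympForm_self, sympForm_swap v y]
  ring

lemma sympTransvection_mul (v : Fin g ⊕ Fin g → R) (c d : R) :
    sympTransvection v c * sympTransvection v d = sympTransvection v (c + d) :=
  Units.ext (sympTransvectionMat_mul v c d)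

lemma sympTransvection_inv (v : Fin g ⊕ Fin g → R) (c : R) :
    (sympTransvection v c)⁻¹ = sympTransvection v (-c) :=
  inv_eq_of_mul_eq_one_right (by
    rw [sympTransvection_mul, add_neg_cancel]
    exact Units.ext (by simp [sympTransvection, sympTransvectionMat]))

lemma sympTransvection_smul_vec (a : R) (v : Fin g ⊕ Fin g → R) (c : R) :
    sympTransvection (a • v) c = sympTransvection v (a * a * c) := by
  refine ext_of_smul fun x => ?_
  simp only [sympTransvection_smul, sympForm_smul_right, smul_smul]
  ring_nf

lemma conj_sympTransvection {s : GL (Fin g ⊕ Fin g) R} (hs : s ∈ Sp g R)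
    (v : Fin g ⊕ Fin g → R) (c : R) :
    s * sympTransvection v c * s⁻¹ = sympTransvection (s • v) c := by
  refine ext_of_smul fun x => ?_
  have hx : sympForm (s⁻¹ • x) v = sympForm x (s • v) := by
    rw [← mem_Sp_iff_sympForm.mp hs, smul_inv_smul]
  rw [mul_smul, mul_smul, sympTransvection_smul, sympTransvection_smul, hx, smul_add,
    smul_inv_smul, units_smul_eq_mulVec, units_smul_eq_mulVec, mulVec_smul]

end Transvection

section Torus

def sympDiag (a : Rˣ) : GL (Fin g ⊕ Fin g) R where
  val := fromBlocks ((a : R) • 1) 0 0 (((a⁻¹ : Rˣ) : R) • 1)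
  inv := fromBlocks (((a⁻¹ : Rˣ) : R) • 1) 0 0 ((a : R) • 1)
  val_inv := by simp [fromBlocks_multiply, smul_smul, fromBlocks_one]
  inv_val := by simp [fromBlocks_multiply, smul_smul, fromBlocks_one]

lemma sympDiag_mem_Sp (a : Rˣ) : sympDiag (g := g) a ∈ Sp g R := by
  show _ = _
  simp [sympDiag, sJ, fromBlocks_transpose, fromBlocks_multiply, smul_smul]

lemma sympDiag_smul_eVec (a : Rˣ) (i : Fin g) :
    sympDiag (g := g) a • (eVec i : Fin g ⊕ Fin g → R) =
      (a : R) • (eVec i : Fin g ⊕ Fin g → R) := by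
  funext p
  rcases p with j | j <;>
    simp [sympDiag, eVec, fromBlocks, Pi.single_apply, one_apply]

end Torus

section TransvectionGroup

def IsUnimodular (v : Fin g ⊕ Fin g → R) : Prop := ∃ p, IsUnit (v p)

-- The `ω`-orthogonal of the first `k` hyperbolic planes `⟨e_i, f_i⟩`.
variable (g R) in
def perpPairs (k : ℕ) : Submodule R (Fin g ⊕ Fin g → R) where
  carrier := {v | ∀ i : Fin g, (i : ℕ) < k → v (Sum.inl i) = 0 ∧ v (Sum.inr i) = 0}
  add_mem' hv hw i hi := by simp [(hv i hi).1, (hv i hi).2, (hw i hi).1, (hw i hi).2]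
  zero_mem' _ _ := by simp
  smul_mem' c v hv i hi := by simp [(hv i hi).1, (hv i hi).2]

lemma eVec_mem_perpPairs {k : ℕ} {j : Fin g} (hj : k ≤ j) : eVec j ∈ perpPairs g R k :=
  fun i hi => by simp [show i ≠ j by omega]

lemma fVec_mem_perpPairs {k : ℕ} {j : Fin g} (hj : k ≤ j) : fVec j ∈ perpPairs g R k :=
  fun i hi => by simp [show i ≠ j by omega]

variable (g R) in
def fixPairs (k : ℕ) : Subgroup (GL (Fin g ⊕ Fin g) R) :=
  ⨅ (i : Fin g) (_ : (i : ℕ) < k),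
    MulAction.stabilizer _ (eVec i : Fin g ⊕ Fin g → R) ⊓
      MulAction.stabilizer _ (fVec i : Fin g ⊕ Fin g → R)

lemma mem_fixPairs {k : ℕ} {a : GL (Fin g ⊕ Fin g) R} :
    a ∈ fixPairs g R k ↔ ∀ i : Fin g, (i : ℕ) < k →
      a • (eVec i : Fin g ⊕ Fin g → R) = eVec i ∧ a • (fVec i : Fin g ⊕ Fin g → R) = fVec i := by
  simp [fixPairs, Subgroup.mem_iInf, MulAction.mem_stabilizer_iff]

variable (g R) in
def transvectionGroup (k : ℕ) : Subgroup (GL (Fin g ⊕ Fin g) R) :=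
  Subgroup.closure
    {t | ∃ v ∈ perpPairs g R k, IsUnimodular v ∧ ∃ c, t = sympTransvection v c}

lemma transvectionGroup_le_Sp (k : ℕ) : transvectionGroup g R k ≤ Sp g R :=
  (Subgroup.closure_le _).mpr fun _ ⟨v, _, _, c, ht⟩ => ht ▸ sympTransvection_mem_Sp v c

lemma transvectionGroup_le_fixPairs (k : ℕ) : transvectionGroup g R k ≤ fixPairs g R k := by
  refine (Subgroup.closure_le _).mpr fun _ ⟨v, hv, _, c, ht⟩ => mem_fixPairs.mpr fun i hi => ?_
  simp [ht, sympTransvection_smul, (hv i hi).1, (hv i hi).2]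

lemma transvectionGroup_antitone {k k' : ℕ} (h : k ≤ k') :
    transvectionGroup g R k' ≤ transvectionGroup g R k :=
  Subgroup.closure_mono fun _ ⟨v, hv, hu, c, ht⟩ =>
    ⟨v, fun i hi => hv i (lt_of_lt_of_le hi h), hu, c, ht⟩

lemma smul_mem_perpPairs {k : ℕ} {a : GL (Fin g ⊕ Fin g) R} (ha : a ∈ Sp g R)
    (ha' : a ∈ fixPairs g R k) {x : Fin g ⊕ Fin g → R} (hx : x ∈ perpPairs g R k) :
    a • x ∈ perpPairs g R k := by
  intro i hi
  obtain ⟨he, hf⟩ := mem_fixPairs.mp ha' i hi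
  have hinl := mem_Sp_iff_sympForm.mp ha x (fVec i)
  have hinr := mem_Sp_iff_sympForm.mp ha x (eVec i)
  rw [hf, sympForm_fVec, sympForm_fVec] at hinl
  rw [he, sympForm_eVec, sympForm_eVec, neg_inj] at hinr
  exact ⟨hinl.trans (hx i hi).1, hinr.trans (hx i hi).2⟩

lemma fixPairs_eq_bot : fixPairs g R g = ⊥ := by
  refine (Subgroup.eq_bot_iff_forall _).mpr fun a ha =>
    Units.ext (ext_of_mulVec_single fun p => ?_)
  rw [Units.val_one, one_mulVec]
  rcases p with i | i
  · exact (mem_fixPairs.mp ha i i.isLt).1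
  · exact (mem_fixPairs.mp ha i i.isLt).2

end TransvectionGroup

section Elimination

variable [IsLocalRing R]

lemma isUnit_add_of_not_isUnit {a b : R} (ha : IsUnit a) (hb : ¬IsUnit b) : IsUnit (a + b) :=
  (IsLocalRing.isUnit_or_isUnit_of_isUnit_add (a := a + b) (b := -b)
    (by simpa using ha)).resolve_right (by rwa [IsUnit.neg_iff])

lemma isUnimodular_of_isUnit_sympForm {v w : Fin g ⊕ Fin g → R} (h : IsUnit (sympForm v w)) :
    IsUnimodular v := by
  by_contra hv
  have hm : ∀ p, v p ∈ IsLocalRing.maximalIdeal R := fun p hp => hv ⟨p, hp⟩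
  rw [sympForm_eq_sum] at h
  exact (IsLocalRing.mem_maximalIdeal _).mp
    (sub_mem (Ideal.sum_mem _ fun i _ => Ideal.mul_mem_right _ _ (hm _))
      (Ideal.sum_mem _ fun i _ => Ideal.mul_mem_right _ _ (hm _))) h

lemma exists_mem_transvectionGroup_smul_eq {k : ℕ} {v τ : Fin g ⊕ Fin g → R}
    (hv : v ∈ perpPairs g R k) (hτ : τ ∈ perpPairs g R k) (h : IsUnit (sympForm v τ)) :
    ∃ t ∈ transvectionGroup g R k, t • v = τ ∧ ∀ x, sympForm x (τ - v) = 0 → t • x = x := by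
  have hvτ : sympForm v (τ - v) = sympForm v τ := by
    rw [sympForm_sub_right, sympForm_self, sub_zero]
  have hu : IsUnimodular (τ - v) :=
    isUnimodular_of_isUnit_sympForm (w := v) (by rw [sympForm_swap, hvτ]; exact h.neg)
  refine ⟨sympTransvection (τ - v) ↑h.unit⁻¹,
    Subgroup.subset_closure ⟨τ - v, sub_mem hτ hv, hu, _, rfl⟩, ?_, fun x hx => ?_⟩
  · rw [sympTransvection_smul, hvτ, IsUnit.val_inv_mul, one_smul, add_sub_cancel]
  · rw [sympTransvection_smul, hx, mul_zero, zero_smul, add_zero]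

lemma exists_mem_transvectionGroup_smul_eq_of_isUnit_of_isUnit {k : ℕ}
    {v m τ : Fin g ⊕ Fin g → R} (hv : v ∈ perpPairs g R k) (hm : m ∈ perpPairs g R k)
    (hτ : τ ∈ perpPairs g R k) (hvm : IsUnit (sympForm v m)) (hmτ : IsUnit (sympForm m τ)) :
    ∃ t ∈ transvectionGroup g R k, t • v = τ ∧
      ∀ x, sympForm x (m - v) = 0 → sympForm x (τ - m) = 0 → t • x = x := by
  obtain ⟨t₁, ht₁, hv₁, hfix₁⟩ := exists_mem_transvectionGroup_smul_eq hv hm hvm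
  obtain ⟨t₂, ht₂, hv₂, hfix₂⟩ := exists_mem_transvectionGroup_smul_eq hm hτ hmτ
  exact ⟨t₂ * t₁, mul_mem ht₂ ht₁, by rw [mul_smul, hv₁, hv₂],
    fun x hx₁ hx₂ => by rw [mul_smul, hfix₁ x hx₁, hfix₂ x hx₂]⟩

-- Since `ω(m, e_kk) = -m (inr kk)`, such an `m` is a stepping stone from `v` to `e_kk`.
lemma exists_mem_perpPairs_isUnit_sympForm {k : ℕ} {kk : Fin g} (hk : k ≤ kk)
    {v : Fin g ⊕ Fin g → R} (hv : v ∈ perpPairs g R k) (hu : IsUnimodular v) :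
    ∃ m ∈ perpPairs g R k, IsUnit (sympForm v m) ∧ m (Sum.inr kk) = 1 := by
  by_cases hvk : IsUnit (v (Sum.inl kk))
  · exact ⟨fVec kk, fVec_mem_perpPairs hk, by simpa using hvk, by simp⟩
  obtain ⟨b, hb, hvb, hbk⟩ : ∃ b ∈ perpPairs g R k, IsUnit (sympForm v b) ∧ b (Sum.inr kk) = 0 := by
    obtain ⟨p, hp⟩ := hu
    rcases p with j | j
    · have hj : k ≤ j := not_lt.mp fun hj => not_isUnit_zero ((hv j hj).1 ▸ hp)
      have hjk : kk ≠ j := by rintro rfl; exact hvk hp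
      exact ⟨fVec j, fVec_mem_perpPairs hj, by simpa using hp, by simp [hjk]⟩
    · have hj : k ≤ j := not_lt.mp fun hj => not_isUnit_zero ((hv j hj).2 ▸ hp)
      exact ⟨eVec j, eVec_mem_perpPairs hj, by simpa using hp, by simp⟩
  refine ⟨fVec kk + b, add_mem (fVec_mem_perpPairs hk) hb, ?_, by simp [hbk]⟩
  rw [sympForm_add_right, sympForm_fVec, add_comm]
  exact isUnit_add_of_not_isUnit hvb hvk

lemma exists_mem_transvectionGroup_smul_eq_eVec {k : ℕ} {kk : Fin g} (hk : k ≤ kk)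
    {v : Fin g ⊕ Fin g → R} (hv : v ∈ perpPairs g R k) (hu : IsUnimodular v) :
    ∃ t ∈ transvectionGroup g R k, t • v = eVec kk := by
  obtain ⟨m, hm, hvm, hmk⟩ := exists_mem_perpPairs_isUnit_sympForm hk hv hu
  obtain ⟨t, ht, htv, -⟩ := exists_mem_transvectionGroup_smul_eq_of_isUnit_of_isUnit hv hm
    (eVec_mem_perpPairs hk) hvm (by simp [hmk])
  exact ⟨t, ht, htv⟩

lemma exists_mem_transvectionGroup_smul_eq_fVec {k : ℕ} {kk : Fin g} (hk : k ≤ kk)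
    {w : Fin g ⊕ Fin g → R} (hw : w ∈ perpPairs g R k) (hwk : w (Sum.inr kk) = 1) :
    ∃ t ∈ transvectionGroup g R k,
      t • (eVec kk : Fin g ⊕ Fin g → R) = eVec kk ∧ t • w = fVec kk := by
  by_cases hu : IsUnit (w (Sum.inl kk))
  · obtain ⟨t, ht, htw, hfix⟩ :=
      exists_mem_transvectionGroup_smul_eq hw (fVec_mem_perpPairs hk) (by simpa using hu)
    exact ⟨t, ht, hfix _ (by simp [hwk]), htw⟩
  · have hwm : IsUnit (sympForm w (eVec kk + fVec kk)) := by
      rw [sympForm_add_right, sympForm_eVec, sympForm_fVec, hwk]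
      exact isUnit_add_of_not_isUnit isUnit_one.neg hu
    obtain ⟨t, ht, htw, hfix⟩ := exists_mem_transvectionGroup_smul_eq_of_isUnit_of_isUnit hw
      (add_mem (eVec_mem_perpPairs hk) (fVec_mem_perpPairs hk)) (fVec_mem_perpPairs hk) hwm
      (by simp)
    exact ⟨t, ht, hfix _ (by simp [hwk]) (by simp), htw⟩

end Elimination

section Generation

variable [IsLocalRing R]

lemma exists_mem_transvectionGroup_mul_mem_fixPairs {k : ℕ} {kk : Fin g} (hk : (kk : ℕ) = k)
    {a : GL (Fin g ⊕ Fin g) R} (ha : a ∈ Sp g R) (ha' : a ∈ fixPairs g R k) :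
    ∃ t ∈ transvectionGroup g R k, t * a ∈ fixPairs g R (k + 1) := by
  have hv : IsUnit (sympForm (a • (eVec kk : Fin g ⊕ Fin g → R)) (a • fVec kk)) := by
    simp [mem_Sp_iff_sympForm.mp ha]
  obtain ⟨t₁, ht₁, hte⟩ := exists_mem_transvectionGroup_smul_eq_eVec hk.ge
    (smul_mem_perpPairs ha ha' (eVec_mem_perpPairs hk.ge)) (isUnimodular_of_isUnit_sympForm hv)
  have ha₁ : t₁ * a ∈ Sp g R := mul_mem (transvectionGroup_le_Sp k ht₁) ha
  have ha₁' : t₁ * a ∈ fixPairs g R k := mul_mem (transvectionGroup_le_fixPairs k ht₁) ha'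
  have ha₁e : (t₁ * a) • (eVec kk : Fin g ⊕ Fin g → R) = eVec kk := by rw [mul_smul, hte]
  have hwk : ((t₁ * a) • (fVec kk : Fin g ⊕ Fin g → R)) (Sum.inr kk) = 1 :=
    calc ((t₁ * a) • (fVec kk : Fin g ⊕ Fin g → R)) (Sum.inr kk)
        = sympForm ((t₁ * a) • eVec kk) ((t₁ * a) • fVec kk) := by rw [ha₁e, eVec_sympForm]
      _ = 1 := by simp [mem_Sp_iff_sympForm.mp ha₁]
  obtain ⟨t₂, ht₂, hte₂, htf₂⟩ := exists_mem_transvectionGroup_smul_eq_fVec hk.ge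
    (smul_mem_perpPairs ha₁ ha₁' (fVec_mem_perpPairs hk.ge)) hwk
  refine ⟨t₂ * t₁, mul_mem ht₂ ht₁, mem_fixPairs.mpr fun i hi => ?_⟩
  rw [mul_assoc]
  rcases Nat.lt_succ_iff_lt_or_eq.mp hi with hi | hi
  · exact mem_fixPairs.mp (mul_mem (transvectionGroup_le_fixPairs k ht₂) ha₁') i hi
  · obtain rfl : i = kk := Fin.ext (hi.trans hk.symm)
    exact ⟨by rw [mul_smul, ha₁e, hte₂], by rw [mul_smul, htf₂]⟩

lemma Sp_inf_fixPairs_le_transvectionGroup {k : ℕ} (hk : k ≤ g) :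
    Sp g R ⊓ fixPairs g R k ≤ transvectionGroup g R 0 := by
  refine Nat.decreasingInduction (motive := fun k _ => Sp g R ⊓ fixPairs g R k ≤ _)
    (fun k hk ih => ?_) (by simp [fixPairs_eq_bot]) hk
  rintro a ⟨ha, ha'⟩
  obtain ⟨t, ht, hta⟩ := exists_mem_transvectionGroup_mul_mem_fixPairs (kk := ⟨k, hk⟩) rfl ha ha'
  have htaT := ih ⟨mul_mem (transvectionGroup_le_Sp k ht) ha, hta⟩
  simpa using mul_mem (inv_mem (transvectionGroup_antitone (Nat.zero_le k) ht)) htaT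

lemma Sp_le_transvectionGroup : Sp g R ≤ transvectionGroup g R 0 := fun _ ha =>
  Sp_inf_fixPairs_le_transvectionGroup (Nat.zero_le g)
    ⟨ha, mem_fixPairs.mpr fun _ hi => absurd hi (Nat.not_lt_zero _)⟩

end Generation

section Perfect

open scoped commutatorElement

lemma sympTransvection_eVec_eq_commutator (i : Fin g) (h₂ : IsUnit (2 : R)) (h₃ : IsUnit (3 : R))
    (c : R) : sympTransvection (eVec i) c =
      ⁅sympDiag (g := g) h₂.unit, sympTransvection (eVec i) (↑h₃.unit⁻¹ * c)⁆ := by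
  -- `diag(2, 1/2)` conjugates `T_e(c')` to `T_{2e}(c') = T_e(4c')`; the commutator is `T_e(3c')`.
  rw [commutatorElement_def, conj_sympTransvection (sympDiag_mem_Sp _), sympDiag_smul_eVec,
    sympTransvection_smul_vec, sympTransvection_inv, sympTransvection_mul, IsUnit.unit_spec]
  congr 1
  linear_combination -c * h₃.mul_val_inv

lemma sympTransvection_mem_commutator [IsLocalRing R] (hg : 0 < g) (h₂ : IsUnit (2 : R))
    (h₃ : IsUnit (3 : R)) {v : Fin g ⊕ Fin g → R} (hv : IsUnimodular v) (c : R) :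
    sympTransvection v c ∈ ⁅Sp g R, Sp g R⁆ := by
  obtain ⟨t, ht, htv⟩ := exists_mem_transvectionGroup_smul_eq_eVec (kk := ⟨0, hg⟩) le_rfl
    (fun i hi => absurd hi (Nat.not_lt_zero _)) hv
  have ht' := inv_mem (transvectionGroup_le_Sp 0 ht)
  have hconj : sympTransvection v c = MulAut.conj t⁻¹
      ⁅sympDiag (g := g) h₂.unit, sympTransvection (eVec ⟨0, hg⟩) (↑h₃.unit⁻¹ * c)⁆ := by
    rw [← sympTransvection_eVec_eq_commutator, MulAut.conj_apply, conj_sympTransvection ht', ← htv,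
      inv_smul_smul]
  rw [hconj, map_commutatorElement]
  exact Subgroup.commutator_mem_commutator
    (mul_mem (mul_mem ht' (sympDiag_mem_Sp _)) (inv_mem ht'))
    (mul_mem (mul_mem ht' (sympTransvection_mem_Sp _ _)) (inv_mem ht'))

lemma Sp_le_commutator [IsLocalRing R] (hg : 0 < g) (h₂ : IsUnit (2 : R)) (h₃ : IsUnit (3 : R)) :
    Sp g R ≤ ⁅Sp g R, Sp g R⁆ :=
  Sp_le_transvectionGroup.trans <| (Subgroup.closure_le _).mpr fun _ ⟨_, _, hv, c, ht⟩ =>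
    ht ▸ sympTransvection_mem_commutator hg h₂ h₃ hv c

end Perfect

section PiSubgroup

open scoped commutatorElement

variable {ι Γ : Type*} [Group Γ] {S : Subgroup Γ} {G : Subgroup (ι → Γ)}

lemma commutator_inf_pi_bot_le (T T' : Set ι) :
    ⁅G ⊓ Subgroup.pi T (fun _ => ⊥), G ⊓ Subgroup.pi T' (fun _ => ⊥)⁆ ≤
      G ⊓ Subgroup.pi (T ∪ T') (fun _ => ⊥) := by
  refine Subgroup.commutator_le.mpr fun p hp q hq => ?_
  obtain ⟨hpG, hp⟩ := Subgroup.mem_inf.mp hp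
  obtain ⟨hqG, hq⟩ := Subgroup.mem_inf.mp hq
  refine Subgroup.mem_inf.mpr ⟨?_, fun m hm => ?_⟩
  · rw [commutatorElement_def]
    exact mul_mem (mul_mem (mul_mem hpG hqG) (inv_mem hpG)) (inv_mem hqG)
  · rcases hm with hm | hm
    · simp [commutatorElement_def, Subgroup.mem_bot.mp (hp m hm)]
    · simp [commutatorElement_def, Subgroup.mem_bot.mp (hq m hm)]

lemma le_map_eval_inf_pi_bot [DecidableEq ι] [Nontrivial ι] (hS : S ≤ ⁅S, S⁆) {i : ι}
    (hpair : ∀ j, j ≠ i → ∀ s ∈ S, ∃ p ∈ G, p i = s ∧ p j = 1) (T : Finset ι) (hiT : i ∉ T) :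
    S ≤ (G ⊓ Subgroup.pi ↑T (fun _ => ⊥)).map (Pi.evalMonoidHom (fun _ => Γ) i) := by
  have hsingle : ∀ j, j ≠ i →
      S ≤ (G ⊓ Subgroup.pi {j} (fun _ => ⊥)).map (Pi.evalMonoidHom (fun _ => Γ) i) :=
    fun j hj s hs =>
      let ⟨p, hpG, hpi, hpj⟩ := hpair j hj s hs
      ⟨p, ⟨hpG, fun m hm => Subgroup.mem_bot.mpr (hm ▸ hpj)⟩, hpi⟩
  induction T using Finset.induction_on with
  | empty =>
    obtain ⟨j, hj⟩ := exists_ne i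
    refine (hsingle j hj).trans (Subgroup.map_mono (inf_le_inf_left _ ?_))
    simp [Subgroup.pi_empty]
  | insert j T _ ih =>
    rw [Finset.mem_insert, not_or] at hiT
    calc S ≤ ⁅S, S⁆ := hS
      _ ≤ ⁅(G ⊓ Subgroup.pi {j} (fun _ => ⊥)).map (Pi.evalMonoidHom (fun _ => Γ) i),
          (G ⊓ Subgroup.pi ↑T (fun _ => ⊥)).map (Pi.evalMonoidHom (fun _ => Γ) i)⁆ :=
        Subgroup.commutator_mono (hsingle j (Ne.symm hiT.1)) (ih hiT.2)
      _ ≤ _ := by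
        rw [← Subgroup.map_commutator, Finset.coe_insert, Set.insert_eq]
        exact Subgroup.map_mono (commutator_inf_pi_bot_le _ _)

lemma pi_le_of_forall_exists_pair [DecidableEq ι] [Fintype ι] [Nontrivial ι] (hS : S ≤ ⁅S, S⁆)
    (hpair : ∀ i j, i ≠ j → ∀ s ∈ S, ∃ p ∈ G, p i = s ∧ p j = 1) :
    Subgroup.pi Set.univ (fun _ => S) ≤ G := by
  refine Subgroup.pi_le_iff.mpr fun i => Subgroup.map_le_iff_le_comap.mpr fun s hs => ?_
  obtain ⟨p, hp, hps⟩ := le_map_eval_inf_pi_bot hS (fun j hj => hpair i j hj.symm)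
    (Finset.univ.erase i) (Finset.notMem_erase i _) hs
  obtain ⟨hpG, hp⟩ := Subgroup.mem_inf.mp hp
  show Pi.mulSingle i s ∈ G
  convert hpG using 1
  funext m
  rcases eq_or_ne m i with rfl | hm
  · simpa using hps.symm
  · simpa [hm] using (Subgroup.mem_bot.mp (hp m (by simp [hm]))).symm

end PiSubgroup

section Multiplier

lemma smul_sJ_injective (hg : 0 < g) : Function.Injective fun c : R => c • sJ g R :=
  fun c d h => by simpa [sJ] using congrFun (congrFun h (Sum.inl ⟨0, hg⟩)) (Sum.inr ⟨0, hg⟩)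

lemma multiplier_eq (hg : 0 < g) {a : GL (Fin g ⊕ Fin g) R} {u : Rˣ}
    (h : (a : Matrix (Fin g ⊕ Fin g) (Fin g ⊕ Fin g) R)ᵀ * sJ g R * a = (u : R) • sJ g R) :
    multiplier a = u := by
  have hex : ∃ w : Rˣ,
      (a : Matrix (Fin g ⊕ Fin g) (Fin g ⊕ Fin g) R)ᵀ * sJ g R * a = (w : R) • sJ g R := ⟨u, h⟩
  rw [multiplier, dif_pos hex]
  exact Units.ext (smul_sJ_injective hg (hex.choose_spec.symm.trans h))

lemma iota_transpose_mul_sJ_mul (u : Rˣ) :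
    (iota g R u : Matrix (Fin g ⊕ Fin g) (Fin g ⊕ Fin g) R)ᵀ * sJ g R * iota g R u =
      (u : R) • sJ g R := by
  simp [iota, iotaM, sJ, fromBlocks_transpose, fromBlocks_multiply, fromBlocks_smul]

lemma exists_mem_DeltaN_multiplier_eq (hg : 0 < g) {n : ℕ} (i : Fin n) (u : Rˣ) :
    ∃ p ∈ DeltaN g R n, multiplier (p i) = u :=
  ⟨fun _ => iota g R u, ⟨u, fun _ => iota_transpose_mul_sJ_mul u⟩,
    multiplier_eq hg (iota_transpose_mul_sJ_mul u)⟩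

lemma map_DeltaN_eq_Delta {n : ℕ} {i j : Fin n} (hij : i ≠ j) :
    (DeltaN g R n).map ((Pi.evalMonoidHom (fun _ : Fin n => GL (Fin g ⊕ Fin g) R) i).prod
      (Pi.evalMonoidHom (fun _ : Fin n => GL (Fin g ⊕ Fin g) R) j)) = Delta g R := by
  ext ⟨a, b⟩
  constructor
  · rintro ⟨p, ⟨u, hp⟩, hpab⟩
    obtain ⟨rfl, rfl⟩ := Prod.ext_iff.mp hpab
    exact ⟨u, hp i, hp j⟩
  · rintro ⟨u, ha, hb⟩
    refine ⟨Function.update (fun _ => a) j b, ⟨u, fun k => ?_⟩, by simp [hij]⟩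
    rcases eq_or_ne k j with rfl | hk
    · simpa using hb
    · simpa [hk] using ha

lemma DeltaN_le_of_pi_Sp_le (hg : 0 < g) {n : ℕ} {G : Subgroup (Fin n → GL (Fin g ⊕ Fin g) R)}
    (hG : G ≤ DeltaN g R n) (hSp : Subgroup.pi Set.univ (fun _ => Sp g R) ≤ G) (i : Fin n)
    (hmult : ∀ u : Rˣ, ∃ p ∈ G, multiplier (p i) = u) :
    DeltaN g R n ≤ G := by
  rintro y ⟨u, hy⟩
  obtain ⟨p, hpG, hpu⟩ := hmult u
  obtain ⟨u', hp⟩ := hG hpG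
  obtain rfl : u' = u := hpu ▸ (multiplier_eq hg (hp i)).symm
  have hyp : y * p⁻¹ ∈ Subgroup.pi Set.univ (fun _ => Sp g R) := fun k _ => by
    have hk := symp_mul (hy k) (symp_inv (hp k))
    rwa [mul_inv_cancel, Units.val_one, one_smul] at hk
  simpa using mul_mem (hSp hyp) hpG

end Multiplier

lemma isUnit_natCast_padicInt {ℓ : ℕ} [Fact ℓ.Prime] {m : ℕ} (h0 : 0 < m) (hm : m < ℓ) :
    IsUnit (m : ℤ_[ℓ]) := by
  by_contra h
  have hdvd : (ℓ : ℤ) ∣ m :=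
    (PadicInt.norm_int_lt_one_iff_dvd _).mp (by simpa using PadicInt.not_isUnit_iff.mp h)
  exact absurd (Int.le_of_dvd (by omega) hdvd) (by omega)

/-- reduction of fullness in `Δ_{2g,n}(Z_ℓ)` to pairs. -/
theorem statement10 (g n ℓ : ℕ) (hg : 1 ≤ g) (hn : 2 ≤ n) [Fact (Nat.Prime ℓ)] (hℓ5 : 5 ≤ ℓ)
    (G : Subgroup ((_ : Fin n) → GL (Fin g ⊕ Fin g) ℤ_[ℓ]))
    (hG : G ≤ DeltaN g ℤ_[ℓ] n) :
    G = DeltaN g ℤ_[ℓ] n ↔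
      ({u : ℤ_[ℓ]ˣ | ∃ p ∈ G, multiplier (p ⟨0, by omega⟩) = u} = Set.univ ∧
       ∀ i j : Fin n, i ≠ j →
         G.map ((Pi.evalMonoidHom (fun _ : Fin n => GL (Fin g ⊕ Fin g) ℤ_[ℓ]) i).prod
           (Pi.evalMonoidHom (fun _ : Fin n => GL (Fin g ⊕ Fin g) ℤ_[ℓ]) j)) = Delta g ℤ_[ℓ]) := by
  constructor
  · rintro rfl
    exact ⟨Set.eq_univ_of_forall (exists_mem_DeltaN_multiplier_eq hg _),
      fun i j hij => map_DeltaN_eq_Delta hij⟩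
  · rintro ⟨hmult, hproj⟩
    have : Nontrivial (Fin n) := Fin.nontrivial_iff_two_le.mpr hn
    have hperfect : Sp g ℤ_[ℓ] ≤ ⁅Sp g ℤ_[ℓ], Sp g ℤ_[ℓ]⁆ := Sp_le_commutator hg
      (by exact_mod_cast isUnit_natCast_padicInt (m := 2) (by omega) (by omega))
      (by exact_mod_cast isUnit_natCast_padicInt (m := 3) (by omega) (by omega))
    have hpair : ∀ i j : Fin n, i ≠ j → ∀ s ∈ Sp g ℤ_[ℓ], ∃ p ∈ G, p i = s ∧ p j = 1 := by
      intro i j hij s hs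
      have hs1 : ((s, 1) : GL (Fin g ⊕ Fin g) ℤ_[ℓ] × _) ∈ Delta g ℤ_[ℓ] :=
        ⟨1, by rw [Units.val_one, one_smul]; exact hs, by simp⟩
      obtain ⟨p, hp, hps⟩ := (hproj i j hij).symm ▸ hs1
      exact ⟨p, hp, congrArg Prod.fst hps, congrArg Prod.snd hps⟩
    exact le_antisymm hG (DeltaN_le_of_pi_Sp_le hg hG (pi_le_of_forall_exists_pair hperfect hpair)
      ⟨0, by omega⟩ (Set.eq_univ_iff_forall.mp hmult))

end Paper
end

section
/- Let ℓ ∈ {2, 3} and let G be a subgroup of Δ₂(F_ℓ) such that pr_i(G) = GL₂(F_ℓ) for each i ∈ {1,2}. Then G = Δ₂(F_ℓ) if and only if there exists an element (g₁, g₂) ∈ G with (dim₁ g₁, dim₁ g₂) ∈ {(0,1), (1,0), (1,2), (2,1)} when ℓ = 2, respectively (dim₁ g₁, dim₁ g₂) ∈ {(1,2), (2,1)} when ℓ = 3. -/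
/-! The subgroup `{a | (a, 1) ∈ G}` is normal in `GL₂(F_ℓ)` because `G` projects onto the
first factor. An element of `G` with `dim₁`-pair `(1, 2)` puts a nontrivial transvection into
it; all of these are conjugate and generate `SL₂(F_ℓ)`, so `SL₂ × 1 ≤ G`, and since `G` also
projects onto the second factor this forces `G = Δ₂(F_ℓ)`. The pair `(2, 1)` is symmetric, and
conversely `(!![1, 1; 0, 1], 1) ∈ Δ₂(F_ℓ)` has pair `(1, 2)`; this works for every prime `ℓ`.
For `ℓ = 2`, elements of `GL₂(F₂)` without fixed vectors have order 3 and transvections have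
order 2, so cubing turns the pairs `(0, 1)` and `(1, 0)` into `(2, 1)` and `(1, 2)`. -/

open Matrix

namespace Paper

/-- The fiber product `Δ₂(F_ℓ) = GL₂ ×_det GL₂` over the determinant (for `g = 1` the
multiplier of `GSp₂ = GL₂` is the determinant). -/
def Delta2 (ℓ : ℕ) : Subgroup (GL (Fin 2) (ZMod ℓ) × GL (Fin 2) (ZMod ℓ)) where
  carrier := {p | Matrix.det (p.1 : Matrix (Fin 2) (Fin 2) (ZMod ℓ))
    = Matrix.det (p.2 : Matrix (Fin 2) (Fin 2) (ZMod ℓ))}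
  one_mem' := rfl
  mul_mem' := by
    intro a b ha hb
    show Matrix.det ((a.1 * b.1 : GL (Fin 2) (ZMod ℓ)) : Matrix (Fin 2) (Fin 2) (ZMod ℓ))
      = Matrix.det ((a.2 * b.2 : GL (Fin 2) (ZMod ℓ)) : Matrix (Fin 2) (Fin 2) (ZMod ℓ))
    rw [Units.val_mul, Units.val_mul, Matrix.det_mul, Matrix.det_mul]
    rw [show Matrix.det (a.1 : Matrix (Fin 2) (Fin 2) (ZMod ℓ)) = _ from ha,
      show Matrix.det (b.1 : Matrix (Fin 2) (Fin 2) (ZMod ℓ)) = _ from hb]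
  inv_mem' := by
    intro a ha
    show Matrix.det ((a.1⁻¹ : GL (Fin 2) (ZMod ℓ)) : Matrix (Fin 2) (Fin 2) (ZMod ℓ))
      = Matrix.det ((a.2⁻¹ : GL (Fin 2) (ZMod ℓ)) : Matrix (Fin 2) (Fin 2) (ZMod ℓ))
    rw [Matrix.coe_units_inv, Matrix.coe_units_inv, Matrix.det_nonsing_inv,
      Matrix.det_nonsing_inv]
    rw [show Matrix.det (a.1 : Matrix (Fin 2) (Fin 2) (ZMod ℓ)) = _ from ha]

/-- `dim₁ x` is the `F_ℓ`-dimension of the kernel of `x - I`. -/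
noncomputable def dim1 {ℓ : ℕ} (x : GL (Fin 2) (ZMod ℓ)) : ℕ :=
  Module.finrank (ZMod ℓ)
    (LinearMap.ker (Matrix.mulVecLin ((x : Matrix (Fin 2) (Fin 2) (ZMod ℓ)) - 1)))

open Matrix.GeneralLinearGroup
open scoped MatrixGroups

lemma mem_Delta2 {ℓ : ℕ} {p : GL (Fin 2) (ZMod ℓ) × GL (Fin 2) (ZMod ℓ)} :
    p ∈ Delta2 ℓ ↔ (p.1 : Matrix (Fin 2) (Fin 2) (ZMod ℓ)).det
      = (p.2 : Matrix (Fin 2) (Fin 2) (ZMod ℓ)).det :=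
  Iff.rfl

lemma mem_of_isConj {G : Type*} [Group G] {N : Subgroup G} [N.Normal] {a b : G} (ha : a ∈ N)
    (h : IsConj a b) : b ∈ N := by
  obtain ⟨c, rfl⟩ := isConj_iff.mp h
  exact Subgroup.Normal.conj_mem inferInstance a ha c

lemma surjective_comp_subtype_of_map_eq_top {A B : Type*} [Group A] [Group B] {G : Subgroup A}
    {f : A →* B} (h : G.map f = ⊤) : Function.Surjective (f ∘ G.subtype) := by
  intro b
  obtain ⟨a, ha, rfl⟩ := Subgroup.mem_map.mp (h ▸ Subgroup.mem_top b)
  exact ⟨⟨a, ha⟩, rfl⟩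

lemma det_mul_inv_eq_one {n R : Type*} [Fintype n] [DecidableEq n] [CommRing R] {x y : GL n R}
    (h : (x : Matrix n n R).det = (y : Matrix n n R).det) :
    ((x * y⁻¹ : GL n R) : Matrix n n R).det = 1 := by
  rw [Units.val_mul, det_mul, h, ← det_mul, ← Units.val_mul, mul_inv_cancel, Units.val_one,
    det_one]

section Field

variable {F : Type*} [Field F]

lemma isConj_upperRightHom_one {g : GL (Fin 2) F}
    (hdet : (g : Matrix (Fin 2) (Fin 2) F).det = 1)
    (hfix : ((g : Matrix (Fin 2) (Fin 2) F) - 1).det = 0) (hg : g ≠ 1) :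
    IsConj (upperRightHom (1 : F)) g := by
  have hg' : (g : Matrix (Fin 2) (Fin 2) F) ≠ 1 := fun h => hg (Units.ext h)
  set a := (g : Matrix (Fin 2) (Fin 2) F) 0 0
  set b := (g : Matrix (Fin 2) (Fin 2) F) 0 1
  set c := (g : Matrix (Fin 2) (Fin 2) F) 1 0
  set d := (g : Matrix (Fin 2) (Fin 2) F) 1 1
  have hM : (g : Matrix (Fin 2) (Fin 2) F) = !![a, b; c, d] := eta_fin_two _
  rw [hM, det_fin_two_of] at hdet
  rw [det_fin_two] at hfix
  simp only [Matrix.sub_apply, one_apply_eq, one_apply_ne zero_ne_one, one_apply_ne one_ne_zero,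
    sub_zero] at hfix
  have htr : a + d = 2 := by linear_combination hdet - hfix
  -- `g` is unipotent, and the conjugator has columns `(g - 1) v` and `v` for a `v` it moves.
  refine isConj_iff.mpr ?_
  by_cases hc : c = 0
  · have ha : a = 1 := by
      have : (a - 1) ^ 2 = 0 := by linear_combination (-1 : F) * hdet + a * htr - b * hc
      exact sub_eq_zero.mp (pow_eq_zero_iff two_ne_zero |>.mp this)
    have hd : d = 1 := by linear_combination htr - ha
    have hb : b ≠ 0 := by
      rintro hb
      exact hg' (by rw [hM, ha, hb, hc, hd, one_fin_two])
    refine ⟨mkOfDetNeZero !![b, 0; 0, 1] (by simpa using hb),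
      mul_inv_eq_of_eq_mul (Units.ext ?_)⟩
    simp [hM, ha, hc, hd]
  · have e₀ : a - 1 = a * (a - 1) + b * c := by linear_combination hdet - a * htr
    have e₁ : c = c * (a - 1) + d * c := by linear_combination -c * htr
    refine ⟨mkOfDetNeZero !![a - 1, 1; c, 0] (by simpa using hc),
      mul_inv_eq_of_eq_mul (Units.ext ?_)⟩
    simp [hM, ← e₀, ← e₁]

lemma det_transvection_sub_one {i j : Fin 2} (hij : i ≠ j) (c : F) :
    (((SpecialLinearGroup.transvection hij c : SL(2, F)) : Matrix (Fin 2) (Fin 2) F) - 1).det =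
      0 := by
  rw [SpecialLinearGroup.transvection_coe, add_sub_cancel_left]
  fin_cases i <;> fin_cases j <;> simp_all [det_fin_two]

lemma toGL_transvection_ne_one {i j : Fin 2} (hij : i ≠ j) {c : F} (hc : c ≠ 0) :
    SpecialLinearGroup.toGL (SpecialLinearGroup.transvection hij c) ≠ 1 := by
  intro h
  have := congrArg (fun g : GL (Fin 2) F => (g : Matrix (Fin 2) (Fin 2) F) i j) h
  simp [SpecialLinearGroup.transvection_coe, hij] at this
  exact hc this

lemma mem_of_det_eq_one_of_normal {N : Subgroup (GL (Fin 2) F)} [N.Normal] {g : GL (Fin 2) F}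
    (hgN : g ∈ N) (hdet : (g : Matrix (Fin 2) (Fin 2) F).det = 1)
    (hfix : ((g : Matrix (Fin 2) (Fin 2) F) - 1).det = 0) (hg : g ≠ 1)
    {s : GL (Fin 2) F} (hs : (s : Matrix (Fin 2) (Fin 2) F).det = 1) : s ∈ N := by
  have hU : upperRightHom (1 : F) ∈ N :=
    mem_of_isConj hgN (isConj_upperRightHom_one hdet hfix hg).symm
  have hSL : ∀ t : SL(2, F), SpecialLinearGroup.toGL t ∈ N := by
    refine SL2.transvection_induction _ (fun i j hij c => ?_)
      (fun A B hA hB => by simpa using mul_mem hA hB)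
    rcases eq_or_ne c 0 with rfl | hc
    · simp [SpecialLinearGroup.transvection_coeff_zero]
    · exact mem_of_isConj hU <| isConj_upperRightHom_one (by simp)
        (det_transvection_sub_one hij c) (toGL_transvection_ne_one hij hc)
  simpa only [show SpecialLinearGroup.toGL ⟨s, hs⟩ = s from Units.ext rfl] using hSL ⟨s, hs⟩

end Field

section dim1

variable {ℓ : ℕ} [Fact ℓ.Prime]

lemma dim1_eq_zero_iff (x : GL (Fin 2) (ZMod ℓ)) :
    dim1 x = 0 ↔ ((x : Matrix (Fin 2) (Fin 2) (ZMod ℓ)) - 1).det ≠ 0 := by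
  rw [dim1, Submodule.finrank_eq_zero, ker_mulVecLin_eq_bot_iff, Ne,
    ← exists_mulVec_eq_zero_iff]
  grind

lemma dim1_eq_two_iff (x : GL (Fin 2) (ZMod ℓ)) : dim1 x = 2 ↔ x = 1 := by
  constructor
  · intro h
    have htop := Submodule.eq_top_of_finrank_eq (h.trans (Module.finrank_fin_fun _).symm)
    rw [LinearMap.ker_eq_top, ← toLin'_apply', LinearEquiv.map_eq_zero_iff, sub_eq_zero] at htop
    exact Units.ext htop
  · rintro rfl
    rw [dim1, Units.val_one, sub_self, mulVecLin_zero, LinearMap.ker_zero, finrank_top,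
      Module.finrank_fin_fun]

lemma dim1_le_two (x : GL (Fin 2) (ZMod ℓ)) : dim1 x ≤ 2 :=
  (Submodule.finrank_le _).trans_eq (Module.finrank_fin_fun _)

lemma dim1_eq_one_iff (x : GL (Fin 2) (ZMod ℓ)) :
    dim1 x = 1 ↔ ((x : Matrix (Fin 2) (Fin 2) (ZMod ℓ)) - 1).det = 0 ∧ x ≠ 1 := by
  rw [← (dim1_eq_zero_iff x).not_left, Ne, ← dim1_eq_two_iff]
  have := dim1_le_two x
  omega

lemma dim1_upperRightHom_one : dim1 (upperRightHom (1 : ZMod ℓ)) = 1 := by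
  rw [dim1_eq_one_iff, ← AddChar.map_zero_eq_one upperRightHom]
  refine ⟨by simp [det_fin_two], injective_upperRightHom.ne one_ne_zero⟩

end dim1

section ZModTwo

lemma pow_three_eq_one_of_det_sub_one_ne_zero {M : Matrix (Fin 2) (Fin 2) (ZMod 2)}
    (hM : M.det ≠ 0) (h : (M - 1).det ≠ 0) : M ^ 3 = 1 := by
  revert M
  decide

lemma sq_eq_one_of_det_sub_one_eq_zero {M : Matrix (Fin 2) (Fin 2) (ZMod 2)}
    (hM : M.det ≠ 0) (h : (M - 1).det = 0) : M ^ 2 = 1 := by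
  revert M
  decide

lemma pow_three_eq_one_of_dim1_eq_zero {x : GL (Fin 2) (ZMod 2)} (h : dim1 x = 0) : x ^ 3 = 1 :=
  Units.ext <| by
    simpa using pow_three_eq_one_of_det_sub_one_ne_zero x.det_ne_zero ((dim1_eq_zero_iff x).mp h)

lemma pow_three_eq_self_of_dim1_eq_one {x : GL (Fin 2) (ZMod 2)} (h : dim1 x = 1) :
    x ^ 3 = x := by
  have hsq : x ^ 2 = 1 := Units.ext <| by
    simpa using sq_eq_one_of_det_sub_one_eq_zero x.det_ne_zero ((dim1_eq_one_iff x).mp h).1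
  rw [pow_succ, hsq, one_mul]

end ZModTwo

section Delta2

variable {ℓ : ℕ} {G : Subgroup (GL (Fin 2) (ZMod ℓ) × GL (Fin 2) (ZMod ℓ))}

lemma eq_Delta2_of_det_eq_one_mem_goursatFst (hG : G ≤ Delta2 ℓ)
    (h2 : G.map (MonoidHom.snd _ _) = ⊤)
    (hK : ∀ s : GL (Fin 2) (ZMod ℓ), (s : Matrix (Fin 2) (Fin 2) (ZMod ℓ)).det = 1 →
      s ∈ G.goursatFst) :
    G = Delta2 ℓ := by
  refine le_antisymm hG fun p hp => ?_
  obtain ⟨q, hq, hqp⟩ := Subgroup.mem_map.mp (h2 ▸ Subgroup.mem_top p.2)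
  have hdet : (p.1 : Matrix (Fin 2) (Fin 2) (ZMod ℓ)).det =
      (q.1 : Matrix (Fin 2) (Fin 2) (ZMod ℓ)).det := by
    rw [mem_Delta2.mp hp, mem_Delta2.mp (hG hq), ← hqp, MonoidHom.coe_snd]
  have := mul_mem (Subgroup.mem_goursatFst.mp (hK _ (det_mul_inv_eq_one hdet))) hq
  convert this using 1
  ext <;> simp [← hqp]

lemma eq_Delta2_of_det_eq_one_mem_goursatSnd (hG : G ≤ Delta2 ℓ)
    (h1 : G.map (MonoidHom.fst _ _) = ⊤)
    (hK : ∀ s : GL (Fin 2) (ZMod ℓ), (s : Matrix (Fin 2) (Fin 2) (ZMod ℓ)).det = 1 →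
      s ∈ G.goursatSnd) :
    G = Delta2 ℓ := by
  refine le_antisymm hG fun p hp => ?_
  obtain ⟨q, hq, hqp⟩ := Subgroup.mem_map.mp (h1 ▸ Subgroup.mem_top p.1)
  have hdet : (p.2 : Matrix (Fin 2) (Fin 2) (ZMod ℓ)).det =
      (q.2 : Matrix (Fin 2) (Fin 2) (ZMod ℓ)).det := by
    rw [← mem_Delta2.mp hp, ← mem_Delta2.mp (hG hq), ← hqp, MonoidHom.coe_fst]
  have := mul_mem (Subgroup.mem_goursatSnd.mp (hK _ (det_mul_inv_eq_one hdet))) hq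
  convert this using 1
  ext <;> simp [← hqp]

theorem eq_Delta2_iff_exists_dim1 [Fact ℓ.Prime] (hG : G ≤ Delta2 ℓ)
    (h1 : G.map (MonoidHom.fst _ _) = ⊤) (h2 : G.map (MonoidHom.snd _ _) = ⊤) :
    G = Delta2 ℓ ↔ ∃ p ∈ G, (dim1 p.1, dim1 p.2) ∈ ({(1,2), (2,1)} : Set (ℕ × ℕ)) := by
  constructor
  · rintro rfl
    refine ⟨(upperRightHom 1, 1), mem_Delta2.mpr (by simp), ?_⟩
    simp only [dim1_upperRightHom_one, (dim1_eq_two_iff _).mpr rfl, Set.mem_insert_iff,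
      true_or]
  · rintro ⟨⟨g₁, g₂⟩, hp, hdim⟩
    have hdet := mem_Delta2.mp (hG hp)
    simp only [Set.mem_insert_iff, Set.mem_singleton_iff, Prod.mk.injEq, dim1_eq_one_iff,
      dim1_eq_two_iff] at hdim
    rcases hdim with ⟨⟨hfix, hne⟩, rfl⟩ | ⟨rfl, hfix, hne⟩
    · have := Subgroup.normal_goursatFst (surjective_comp_subtype_of_map_eq_top h1)
      exact eq_Delta2_of_det_eq_one_mem_goursatFst hG h2 fun s hs =>
        mem_of_det_eq_one_of_normal (Subgroup.mem_goursatFst.mpr hp) (by simpa using hdet)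
          hfix hne hs
    · have := Subgroup.normal_goursatSnd (surjective_comp_subtype_of_map_eq_top h2)
      exact eq_Delta2_of_det_eq_one_mem_goursatSnd hG h1 fun s hs =>
        mem_of_det_eq_one_of_normal (Subgroup.mem_goursatSnd.mpr hp) (by simpa using hdet.symm)
          hfix hne hs

end Delta2

lemma exists_dim1_of_exists_dim1_zmod_two
    {G : Subgroup (GL (Fin 2) (ZMod 2) × GL (Fin 2) (ZMod 2))}
    (h : ∃ p ∈ G, (dim1 p.1, dim1 p.2) ∈ ({(0,1), (1,0), (1,2), (2,1)} : Set (ℕ × ℕ))) :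
    ∃ p ∈ G, (dim1 p.1, dim1 p.2) ∈ ({(1,2), (2,1)} : Set (ℕ × ℕ)) := by
  obtain ⟨p, hp, hdim⟩ := h
  simp only [Set.mem_insert_iff, Set.mem_singleton_iff, Prod.mk.injEq] at hdim
  rcases hdim with ⟨h₁, h₂⟩ | ⟨h₁, h₂⟩ | hdim | hdim
  · refine ⟨p ^ 3, pow_mem hp 3, ?_⟩
    simp [pow_three_eq_one_of_dim1_eq_zero h₁, pow_three_eq_self_of_dim1_eq_one h₂,
      (dim1_eq_two_iff _).mpr, h₂]
  · refine ⟨p ^ 3, pow_mem hp 3, ?_⟩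
    simp [pow_three_eq_one_of_dim1_eq_zero h₂, pow_three_eq_self_of_dim1_eq_one h₁,
      (dim1_eq_two_iff _).mpr, h₁]
  all_goals exact ⟨p, hp, by simp [hdim]⟩

theorem statement12_general (ℓ : ℕ)
    (G : Subgroup (GL (Fin 2) (ZMod ℓ) × GL (Fin 2) (ZMod ℓ))) (hG : G ≤ Delta2 ℓ)
    (h1 : G.map (MonoidHom.fst _ _) = ⊤) (h2 : G.map (MonoidHom.snd _ _) = ⊤) :
    (ℓ = 2 → (G = Delta2 ℓ ↔
      ∃ p ∈ G, (dim1 p.1, dim1 p.2) ∈ ({(0,1), (1,0), (1,2), (2,1)} : Set (ℕ × ℕ)))) ∧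
    (ℓ = 3 → (G = Delta2 ℓ ↔
      ∃ p ∈ G, (dim1 p.1, dim1 p.2) ∈ ({(1,2), (2,1)} : Set (ℕ × ℕ)))) := by
  refine ⟨fun hℓ => ?_, fun hℓ => ?_⟩
  · subst hℓ
    rw [eq_Delta2_iff_exists_dim1 hG h1 h2]
    refine ⟨fun ⟨p, hp, hdim⟩ => ⟨p, hp, ?_⟩, exists_dim1_of_exists_dim1_zmod_two⟩
    rcases hdim with hdim | hdim <;> simp [hdim]
  · subst hℓ
    exact eq_Delta2_iff_exists_dim1 hG h1 h2

/-- criterion for fullness mod `2` and `3` via fixed-space dimensions. -/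
theorem statement12 (ℓ : ℕ) (hℓ : ℓ = 2 ∨ ℓ = 3)
    (G : Subgroup (GL (Fin 2) (ZMod ℓ) × GL (Fin 2) (ZMod ℓ))) (hG : G ≤ Delta2 ℓ)
    (h1 : G.map (MonoidHom.fst _ _) = ⊤) (h2 : G.map (MonoidHom.snd _ _) = ⊤) :
    (ℓ = 2 → (G = Delta2 ℓ ↔
      ∃ p ∈ G, (dim1 p.1, dim1 p.2) ∈ ({(0,1), (1,0), (1,2), (2,1)} : Set (ℕ × ℕ)))) ∧
    (ℓ = 3 → (G = Delta2 ℓ ↔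
      ∃ p ∈ G, (dim1 p.1, dim1 p.2) ∈ ({(1,2), (2,1)} : Set (ℕ × ℕ)))) :=
  statement12_general ℓ G hG h1 h2

end Paper
end
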